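/- arXiv:1506.03913 — 2 statements merged into one kernel-verified Lean document; each statement's English description precedes it below -/
import Mathlib

section
/- Let l ≤ m ≤ n be positive integers with l + m + n = 4b + 3, where b is a positive integer. Then the complete tripartite graph K_{l,m,n} has an equitable (t,2)-tree-coloring for every t ≥ b + 2. -/
open SimpleGraph

noncomputable section

/-- `f` is a `(q,2)`-tree-coloring of `G`: the subgraph induced by each color class
is a forest (acyclic) in which every vertex has at most `2` neighbours inside its class. -/
def IsTreeColoring2 {V : Type*} (G : SimpleGraph V) (q : ℕ) (f : V → Fin q) : Prop :=
  (∀ c : Fin q, (G.induce (f ⁻¹' {c})).IsAcyclic) ∧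
    ∀ v : V, Set.ncard {w : V | G.Adj v w ∧ f w = f v} ≤ 2

/-- The coloring `f` is equitable: any two color classes differ in size by at most one. -/
def IsEquitableColoring {V : Type*} (q : ℕ) (f : V → Fin q) : Prop :=
  ∀ c₁ c₂ : Fin q, Set.ncard (f ⁻¹' {c₁}) ≤ Set.ncard (f ⁻¹' {c₂}) + 1

/-- `G` has an equitable `(q,2)`-tree-coloring. -/
def HasEquitableTreeColoring2 {V : Type*} (G : SimpleGraph V) (q : ℕ) : Prop :=
  ∃ f : V → Fin q, IsTreeColoring2 G q f ∧ IsEquitableColoring q f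

/-- `G` has a proper equitable `q`-coloring. -/
def HasProperEquitableColoring {V : Type*} (G : SimpleGraph V) (q : ℕ) : Prop :=
  ∃ f : V → Fin q, (∀ v w : V, G.Adj v w → f v ≠ f w) ∧ IsEquitableColoring q f

/-- The strong equitable vertex 2-arboricity `va≡₂(G)`: the minimum `p` such that `G`
has an equitable `(q,2)`-tree-coloring for every `q ≥ p`. -/
def va2 {V : Type*} (G : SimpleGraph V) : ℕ :=
  sInf {p : ℕ | ∀ q : ℕ, p ≤ q → HasEquitableTreeColoring2 G q}

/-- The parameter `d` from the definition of `p(q : n₁, …, n_k)`: the minimum value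
greater than `⌊(n₁+⋯+n_k)/q⌋` such that (i) some two distinct `nᵢ, nⱼ` are not divisible
by `d`, or (ii) some `nⱼ` has `nⱼ/⌊nⱼ/d⌋ > d+1`. -/
def dVal {ι : Type*} [Fintype ι] (q : ℕ) (ns : ι → ℕ) : ℕ :=
  sInf {d : ℕ |
    (∑ i, ns i) / q < d ∧
      ((∃ i j : ι, i ≠ j ∧ ¬ d ∣ ns i ∧ ¬ d ∣ ns j) ∨
        ∃ j : ι, ((d : ℚ) + 1) < (ns j : ℚ) / ((ns j / d : ℕ) : ℚ))}

/-- `p(q : n₁, …, n_k) = ⌈n₁/d⌉ + ⋯ + ⌈n_k/d⌉` where `d = dVal q ns`. -/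
def pVal {ι : Type*} [Fintype ι] (q : ℕ) (ns : ι → ℕ) : ℕ :=
  ∑ i, ⌈(ns i : ℚ) / (dVal q ns : ℚ)⌉₊

/-- The part of a vertex of the complete tripartite graph. -/
def triPart {l m n : ℕ} : Fin l ⊕ Fin m ⊕ Fin n → Fin 3
  | Sum.inl _ => 0
  | Sum.inr (Sum.inl _) => 1
  | Sum.inr (Sum.inr _) => 2

/-- The complete tripartite graph `K_{l,m,n}`. -/
def completeTripartiteGraph (l m n : ℕ) : SimpleGraph (Fin l ⊕ Fin m ⊕ Fin n) where
  Adj v w := triPart v ≠ triPart w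
  symm := ⟨fun _ _ h => Ne.symm h⟩
  loopless := ⟨fun _ h => h rfl⟩

/-- Condition A for a triple `(l,m,n)`. -/
def ConditionA (l m n : ℕ) : Prop :=
  ∃ j h k : ℕ, 0 < j ∧ 0 < h ∧ 0 < k ∧
    ((l, m, n) = (4 * j, 4 * h, 4 * k - 1) ∨
     (l, m, n) = (4 * j, 4 * h - 1, 4 * k) ∨
     (l, m, n) = (4 * j - 1, 4 * h, 4 * k) ∨
     (l, m, n) = (4 * j, 4 * h - 2, 4 * k - 3) ∨
     (l, m, n) = (4 * j, 4 * h - 3, 4 * k - 2) ∨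
     (l, m, n) = (4 * j - 2, 4 * h, 4 * k - 3) ∨
     (l, m, n) = (4 * j - 2, 4 * h - 3, 4 * k) ∨
     (l, m, n) = (4 * j - 3, 4 * h, 4 * k - 2) ∨
     (l, m, n) = (4 * j - 3, 4 * h - 2, 4 * k))

/-- Condition B for a triple `(l,m,n)`. -/
def ConditionB (l m n : ℕ) : Prop :=
  ∃ j h k : ℕ, 0 < j ∧ 0 < h ∧ 0 < k ∧
    ((l, m, n) = (4 * (j + 2) + 3, 4 * h, 4 * k) ∨
     (l, m, n) = (4 * j, 4 * (h + 2) + 3, 4 * k) ∨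
     (l, m, n) = (4 * j, 4 * h, 4 * (k + 2) + 3) ∨
     (l, m, n) = (4 * (j + 1) + 2, 4 * h + 1, 4 * k) ∨
     (l, m, n) = (4 * (j + 1) + 2, 4 * h, 4 * k + 1) ∨
     (l, m, n) = (4 * j + 1, 4 * (h + 1) + 2, 4 * k) ∨
     (l, m, n) = (4 * j + 1, 4 * h, 4 * (k + 1) + 2) ∨
     (l, m, n) = (4 * j, 4 * (h + 1) + 2, 4 * k + 1) ∨
     (l, m, n) = (4 * j, 4 * h + 1, 4 * (k + 1) + 2) ∨
     (l, m, n) = (4 * j + 1, 4 * h + 1, 4 * k + 1))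

/-!
Line the `N = l + m + n` vertices up part by part with the largest part in the middle, and cut
the line into `t` consecutive blocks of balanced sizes, which become the color classes. A block of
at most `3` vertices cannot meet all three parts, since the middle part has at least `2` vertices,
so it is triangle-free and hence a path; a block of `4` vertices is kept inside a single part,
where it is independent. If `N ≤ 3t` the sizes `⌊N/t⌋, ⌈N/t⌉` are at most `3`. Otherwise there
are `N - 3t` blocks of size `4`: they go at the start of the first part, at the end of the last
part, and right after the end of the first part; `N + 2 ≤ 4t` leaves room for them.
-/

namespace SimpleGraph

variable {V : Type*} {G : SimpleGraph V}

lemma isAcyclic_of_natCard_le_three_of_cliqueFree [Finite V] (hV : Nat.card V ≤ 3)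
    (hG : G.CliqueFree 3) : G.IsAcyclic := by
  rw [isAcyclic_iff_free_cycleGraph]
  rintro k hk ⟨e⟩
  have hk3 : k = 3 := by
    have := Nat.card_le_card_of_injective _ e.injective
    simp only [Nat.card_eq_fintype_card, Fintype.card_fin] at this
    omega
  subst hk3
  rw [cycleGraph_three_eq_top] at e
  exact (not_cliqueFree_iff_top_isContained 3).mpr ⟨e⟩ hG

lemma ncard_adj_le_two_of_ncard_le_three [Finite V] {s : Set V} (hs : s.ncard ≤ 3) {v : V}
    (hv : v ∈ s) : {w | G.Adj v w ∧ w ∈ s}.ncard ≤ 2 := by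
  have hsub : {w | G.Adj v w ∧ w ∈ s} ⊆ s \ {v} := fun w ⟨hadj, hw⟩ => ⟨hw, hadj.ne'⟩
  have := Set.ncard_le_ncard hsub
  rw [Set.ncard_sdiff_singleton_of_mem hv] at this
  omega

end SimpleGraph

theorem isTreeColoring2_of_forall_class {V : Type*} [Finite V] {G : SimpleGraph V} {q : ℕ}
    (f : V → Fin q) (h : ∀ c, (∀ v ∈ f ⁻¹' {c}, ∀ w ∈ f ⁻¹' {c}, ¬ G.Adj v w) ∨
      ((f ⁻¹' {c}).ncard ≤ 3 ∧ (G.induce (f ⁻¹' {c})).CliqueFree 3)) :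
    IsTreeColoring2 G q f := by
  refine ⟨fun c => ?_, fun v => ?_⟩
  · rcases h c with hind | ⟨hcard, hfree⟩
    · have : G.induce (f ⁻¹' {c}) = ⊥ := by
        ext v w
        exact iff_of_false (hind v v.2 w w.2) id
      simp [this]
    · exact isAcyclic_of_natCard_le_three_of_cliqueFree (by rwa [Nat.card_coe_set_eq]) hfree
  · rcases h (f v) with hind | ⟨hcard, -⟩
    · have : {w | G.Adj v w ∧ f w = f v} = ∅ :=
        Set.eq_empty_of_forall_notMem fun w ⟨hadj, hw⟩ => hind v rfl w hw hadj
      simp [this]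
    · exact ncard_adj_le_two_of_ncard_le_three hcard rfl

section IntervalColoring

variable {V : Type*} {N t : ℕ} {st : ℕ → ℕ}

def blockIndex (st : ℕ → ℕ) (t p : ℕ) : ℕ :=
  Nat.findGreatest (fun c => st c ≤ p) (t - 1)

lemma blockIndex_eq_iff (hmono : Monotone st) (h0 : st 0 = 0) {p c : ℕ} (hp : p < st t)
    (hc : c < t) : blockIndex st t p = c ↔ st c ≤ p ∧ p < st (c + 1) := by
  rw [blockIndex, Nat.findGreatest_eq_iff]
  constructor
  · rintro ⟨-, hle, hgt⟩
    refine ⟨?_, ?_⟩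
    · rcases c with _ | c
      · exact h0.symm ▸ Nat.zero_le p
      · exact hle c.succ_ne_zero
    · by_contra! h
      by_cases hct : c + 1 ≤ t - 1
      · exact hgt c.lt_succ_self hct h
      · exact absurd (hp.trans_le (hmono (by omega : t ≤ c + 1))) h.not_gt
  · rintro ⟨hle, hgt⟩
    exact ⟨by omega, fun _ => hle, fun k hck _ hk => (hgt.trans_le (hmono hck)).not_ge hk⟩

def intervalColoring (e : V ≃ Fin N) (st : ℕ → ℕ) (ht : 0 < t) : V → Fin t := fun v =>
  ⟨blockIndex st t (e v), (Nat.findGreatest_le (t - 1)).trans_lt (Nat.sub_lt ht one_pos)⟩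

variable {e : V ≃ Fin N}

lemma intervalColoring_eq_iff (ht : 0 < t) (hmono : Monotone st) (h0 : st 0 = 0)
    (hN : st t = N) (v : V) (c : Fin t) :
    intervalColoring e st ht v = c ↔ st c ≤ e v ∧ (e v : ℕ) < st (c + 1) := by
  rw [← blockIndex_eq_iff hmono h0 (hN ▸ (e v).isLt) c.isLt, Fin.ext_iff]
  rfl

lemma ncard_preimage_intervalColoring (ht : 0 < t) (hmono : Monotone st) (h0 : st 0 = 0)
    (hN : st t = N) (c : Fin t) :
    (intervalColoring e st ht ⁻¹' {c}).ncard = st (c + 1) - st c := by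
  have hclass : intervalColoring e st ht ⁻¹' {c} =
      (fun v => (e v : ℕ)) ⁻¹' Set.Ico (st c) (st (c + 1)) := by
    ext v
    exact intervalColoring_eq_iff ht hmono h0 hN v c
  have hinj : Function.Injective (fun v => (e v : ℕ)) := Fin.val_injective.comp e.injective
  have hrange : Set.Ico (st c) (st (c + 1)) ⊆ Set.range (fun v => (e v : ℕ)) := by
    intro p ⟨_, hp⟩
    have hpN : p < N := hN ▸ hp.trans_le (hmono c.isLt)
    exact ⟨e.symm ⟨p, hpN⟩, by simp⟩
  rw [hclass, ← Set.ncard_image_of_injective _ hinj, Set.image_preimage_eq_of_subset hrange,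
    Set.ncard_Ico_nat]

end IntervalColoring

/-- Cut points `0 = st 0 ≤ st 1 ≤ ⋯ ≤ st t = N` of `[0, N)` into blocks of balanced sizes at most
`4`, where blocks of size `4` do not straddle `l` or `l + n`. -/
structure IsTreeCut (l n N t : ℕ) (st : ℕ → ℕ) : Prop where
  monotone : Monotone st
  zero : st 0 = 0
  last : st t = N
  le_four : ∀ c < t, st (c + 1) ≤ st c + 4
  balanced : ∀ c₁ < t, ∀ c₂ < t, st (c₁ + 1) - st c₁ ≤ st (c₂ + 1) - st c₂ + 1
  four_avoids : ∀ c < t, st c + 4 ≤ st (c + 1) →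
    (l ≤ st c ∨ st c + 4 ≤ l) ∧ (l + n ≤ st c ∨ st c + 4 ≤ l + n)

lemma isTreeCut_of_le_three_mul {l n N t a k : ℕ} (hN : a * t + k = N) (hk : k ≤ t)
    (h3 : N ≤ 3 * t) : IsTreeCut l n N t (fun c => a * c + min c k) := by
  have ha : a ≤ 2 ∨ (a = 3 ∧ k = 0) ∨ t = 0 := by
    rcases Nat.lt_or_ge a 3 with h | h
    · omega
    · have : 3 * t ≤ a * t := Nat.mul_le_mul_right t h
      rcases h.lt_or_eq with h' | h'
      · have : 4 * t ≤ a * t := Nat.mul_le_mul_right t h'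
        omega
      · subst h'; omega
  have hstep (c : ℕ) :
      a * (c + 1) + min (c + 1) k = a * c + min c k + a + (min (c + 1) k - min c k) := by
    rw [mul_add]; omega
  refine ⟨monotone_nat_of_le_succ fun c => ?_, by simp, by omega,
    fun c _ => ?_, fun c₁ _ c₂ _ => ?_, fun c _ h => ?_⟩
  · rw [hstep]; omega
  · rw [hstep]; omega
  · rw [hstep, hstep]; omega
  · rw [hstep] at h; omega

/-- Blocks of size `4` are the first `a₁`, those with index in `[a₁ + x, a₁ + x + a₂)`, and the last
`a₃`; all others have size `3`. -/
def threeFourCut (t a₁ x a₂ a₃ c : ℕ) : ℕ :=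
  3 * c + min c a₁ + (min c (a₁ + x + a₂) - min c (a₁ + x)) + (c - min c (t - a₃))

lemma threeFourCut_succ {t a₁ x a₂ a₃ : ℕ} (h : a₁ + x + a₂ + a₃ ≤ t) (c : ℕ) :
    threeFourCut t a₁ x a₂ a₃ (c + 1) = threeFourCut t a₁ x a₂ a₃ c + 3 ∨
      threeFourCut t a₁ x a₂ a₃ (c + 1) = threeFourCut t a₁ x a₂ a₃ c + 4 ∧
        (c < a₁ ∨ a₁ + x ≤ c ∧ c < a₁ + x + a₂ ∨ t - a₃ ≤ c) := by
  simp only [threeFourCut]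
  omega

lemma isTreeCut_threeFourCut {l n m t a₁ x a₂ a₃ : ℕ} (h₁ : 4 * a₁ ≤ l)
    (hx : l ≤ 4 * a₁ + 3 * x) (h₂ : 4 * a₁ + 3 * x + 4 * a₂ ≤ l + n) (h₃ : 4 * a₃ ≤ m)
    (ht : a₁ + x + a₂ + a₃ ≤ t) (hN : l + (n + m) = 3 * t + a₁ + a₂ + a₃) :
    IsTreeCut l n (l + (n + m)) t (threeFourCut t a₁ x a₂ a₃) := by
  refine ⟨fun c d hcd => ?_, ?_, ?_, fun c _ => ?_, fun c₁ _ c₂ _ => ?_, fun c hc h => ?_⟩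
  · simp only [threeFourCut]; omega
  · simp only [threeFourCut]; omega
  · simp only [threeFourCut]; omega
  · have := threeFourCut_succ ht c; omega
  · have := threeFourCut_succ ht c₁; have := threeFourCut_succ ht c₂; omega
  · have := threeFourCut_succ ht c
    simp only [threeFourCut] at *
    omega

lemma exists_isTreeCut_of_three_mul_lt {l n m t : ℕ} (hn : 2 ≤ n) (h3 : 3 * t < l + (n + m))
    (h4 : l + (n + m) + 2 ≤ 4 * t) : ∃ st, IsTreeCut l n (l + (n + m)) t st := by
  obtain ⟨r, hr⟩ : ∃ r, r = l + (n + m) - 3 * t := ⟨_, rfl⟩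
  obtain ⟨a₁, ha₁⟩ : ∃ a₁, a₁ = min r (l / 4) := ⟨_, rfl⟩
  obtain ⟨a₃, ha₃⟩ : ∃ a₃, a₃ = min (r - a₁) (m / 4) := ⟨_, rfl⟩
  exact ⟨_, isTreeCut_threeFourCut (a₁ := a₁) (x := (l - 4 * a₁ + 2) / 3) (a₂ := r - a₁ - a₃)
    (a₃ := a₃) (by omega) (by omega) (by omega) (by omega) (by omega) (by omega)⟩

section Tripartite

variable {l m n : ℕ}

/-- The parts are listed in the order `l, n, m`: they occupy the positions `[0, l)`, `[l, l + n)`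
and `[l + n, l + n + m)`, and `band l n` reads off the part (as numbered by `triPart`). -/
def tripartiteOrder (l m n : ℕ) : Fin l ⊕ Fin m ⊕ Fin n ≃ Fin (l + (n + m)) :=
  (Equiv.sumCongr (Equiv.refl _) ((Equiv.sumComm _ _).trans finSumFinEquiv)).trans finSumFinEquiv

def band (l n p : ℕ) : ℕ := if p < l then 0 else if p < l + n then 2 else 1

lemma band_cases (l n p : ℕ) :
    (p < l ∧ band l n p = 0) ∨ (l ≤ p ∧ p < l + n ∧ band l n p = 2) ∨
      (l + n ≤ p ∧ band l n p = 1) := by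
  unfold band
  split_ifs <;> omega

lemma triPart_val_eq_band (v : Fin l ⊕ Fin m ⊕ Fin n) :
    (triPart v : ℕ) = band l n (tripartiteOrder l m n v) := by
  rcases v with i | j | k <;> simp [triPart, tripartiteOrder, band]

lemma completeTripartiteGraph_adj_iff (v w : Fin l ⊕ Fin m ⊕ Fin n) :
    (completeTripartiteGraph l m n).Adj v w ↔
      band l n (tripartiteOrder l m n v) ≠ band l n (tripartiteOrder l m n w) := by
  rw [← triPart_val_eq_band, ← triPart_val_eq_band, Ne, ← Fin.ext_iff]
  rfl

lemma completeTripartiteGraph_not_adj_of_mem_Ico {s : ℕ} (hl : l ≤ s ∨ s + 4 ≤ l)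
    (hln : l + n ≤ s ∨ s + 4 ≤ l + n) {v w : Fin l ⊕ Fin m ⊕ Fin n}
    (hv : (tripartiteOrder l m n v : ℕ) ∈ Set.Ico s (s + 4))
    (hw : (tripartiteOrder l m n w : ℕ) ∈ Set.Ico s (s + 4)) :
    ¬ (completeTripartiteGraph l m n).Adj v w := by
  rw [completeTripartiteGraph_adj_iff, not_not]
  obtain ⟨hv₁, hv₂⟩ := hv
  obtain ⟨hw₁, hw₂⟩ := hw
  rcases band_cases l n (tripartiteOrder l m n v) with h | h | h <;>
    rcases band_cases l n (tripartiteOrder l m n w) with h' | h' | h' <;> omega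

lemma completeTripartiteGraph_not_triangle_of_mem_Ico (hn : 2 ≤ n) {s : ℕ}
    {x y z : Fin l ⊕ Fin m ⊕ Fin n}
    (hx : (tripartiteOrder l m n x : ℕ) ∈ Set.Ico s (s + 3))
    (hy : (tripartiteOrder l m n y : ℕ) ∈ Set.Ico s (s + 3))
    (hz : (tripartiteOrder l m n z : ℕ) ∈ Set.Ico s (s + 3))
    (hxy : (completeTripartiteGraph l m n).Adj x y) (hxz : (completeTripartiteGraph l m n).Adj x z)
    (hyz : (completeTripartiteGraph l m n).Adj y z) : False := by
  rw [completeTripartiteGraph_adj_iff] at hxy hxz hyz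
  obtain ⟨hx₁, hx₂⟩ := hx
  obtain ⟨hy₁, hy₂⟩ := hy
  obtain ⟨hz₁, hz₂⟩ := hz
  rcases band_cases l n (tripartiteOrder l m n x) with h | h | h <;>
    rcases band_cases l n (tripartiteOrder l m n y) with h' | h' | h' <;>
    rcases band_cases l n (tripartiteOrder l m n z) with h'' | h'' | h'' <;> omega

theorem hasEquitableTreeColoring2_of_isTreeCut {t : ℕ} (hn : 2 ≤ n) (ht : 0 < t)
    {st : ℕ → ℕ} (hst : IsTreeCut l n (l + (n + m)) t st) :
    HasEquitableTreeColoring2 (completeTripartiteGraph l m n) t := by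
  set f := intervalColoring (tripartiteOrder l m n) st ht
  have hcard (c : Fin t) : (f ⁻¹' {c}).ncard = st (c + 1) - st c :=
    ncard_preimage_intervalColoring ht hst.monotone hst.zero hst.last c
  have hmem {v c} (hv : v ∈ f ⁻¹' {c}) :
      (tripartiteOrder l m n v : ℕ) ∈ Set.Ico (st c) (st (c + 1)) :=
    (intervalColoring_eq_iff ht hst.monotone hst.zero hst.last v c).mp hv
  refine ⟨f, isTreeColoring2_of_forall_class f fun c => ?_, fun c₁ c₂ => ?_⟩
  · have hle := hst.le_four c c.isLt
    by_cases h4 : st c + 4 ≤ st (c + 1)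
    · obtain ⟨hl, hln⟩ := hst.four_avoids c c.isLt h4
      refine .inl fun v hv w hw => completeTripartiteGraph_not_adj_of_mem_Ico hl hln ?_ ?_
      · exact Set.Ico_subset_Ico_right hle (hmem hv)
      · exact Set.Ico_subset_Ico_right hle (hmem hw)
    · refine .inr ⟨by rw [hcard]; omega, fun s hs => ?_⟩
      obtain ⟨x, y, z, hxy, hxz, hyz, -⟩ := is3Clique_iff.mp hs
      have hIco {u : f ⁻¹' {c}} : (tripartiteOrder l m n u : ℕ) ∈ Set.Ico (st c) (st c + 3) :=
        Set.Ico_subset_Ico_right (by omega) (hmem u.2)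
      exact completeTripartiteGraph_not_triangle_of_mem_Ico hn hIco hIco hIco hxy hxz hyz
  · rw [hcard, hcard]
    exact hst.balanced _ c₁.isLt _ c₂.isLt

end Tripartite

theorem statement11_general (l m n b : ℕ) (hlm : l ≤ m) (hmn : m ≤ n)
    (hb : 0 < b) (hsum : l + m + n = 4 * b + 3) :
    ∀ t : ℕ, b + 2 ≤ t →
      HasEquitableTreeColoring2 (completeTripartiteGraph l m n) t := by
  intro t ht
  have hn : 2 ≤ n := by omega
  obtain ⟨st, hst⟩ : ∃ st, IsTreeCut l n (l + (n + m)) t st := by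
    rcases le_or_gt (l + (n + m)) (3 * t) with h3 | h3
    · exact ⟨_, isTreeCut_of_le_three_mul (Nat.div_add_mod' _ t) (Nat.mod_lt _ (by omega)).le h3⟩
    · exact exists_isTreeCut_of_three_mul_lt hn h3 (by omega)
  exact hasEquitableTreeColoring2_of_isTreeCut hn (by omega) hst

theorem statement11 (l m n b : ℕ) (hl : 0 < l) (hlm : l ≤ m) (hmn : m ≤ n)
    (hb : 0 < b) (hsum : l + m + n = 4 * b + 3) :
    ∀ t : ℕ, b + 2 ≤ t →
      HasEquitableTreeColoring2 (completeTripartiteGraph l m n) t :=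
  statement11_general l m n b hlm hmn hb hsum
end
end

section
/- Let l ≤ m ≤ n be positive integers with l + m + n = 4b + 3 for a positive integer b. Then K_{l,m,n} has an equitable (b,2)-tree-coloring if and only if (l,m,n) satisfies Condition B. -/
open SimpleGraph

noncomputable section

/-!
In an equitable `(b,2)`-tree-coloring of `K_{l,m,n}` on `4b + 3` vertices every color class has
`4` or `5` vertices. A class with at least four vertices cannot meet two parts: if `A` is its trace
on the part of one of its vertices and `B` the rest, every vertex of `A` is adjacent to every vertex
of `B`, so the degree bound forces `|A| = |B| = 2`, and then the class contains either a `4`-cycle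
or a vertex of degree `3`. Hence the classes refine the parts, the part sizes are `4kᵢ + eᵢ` where
`kᵢ` classes lie in part `i`, `eᵢ ≤ kᵢ` of them of size `5`, and `e₀ + e₁ + e₂ = 3`; this is
Condition B. Conversely, cutting each part into `kᵢ` blocks of size `4` or `5` (by residues modulo
`kᵢ`) gives a coloring whose classes are independent sets.
-/

theorem Fin.ncard_setOf_val_mod_eq (N : ℕ) {k j : ℕ} (hk : 0 < k) (hj : j < k) :
    {x : Fin N | x.val % k = j}.ncard = N / k + if j < N % k then 1 else 0 := by
  have himage : Fin.val '' {x : Fin N | x.val % k = j} =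
      ↑({x ∈ Finset.range N | x ≡ j [MOD k]}) := by
    ext x
    simp only [Set.mem_image, Set.mem_ofPred_eq, Finset.coe_filter, Finset.mem_range, Nat.ModEq,
      Nat.mod_eq_of_lt hj]
    exact ⟨fun ⟨y, hy, hyx⟩ => hyx ▸ ⟨y.isLt, hy⟩, fun ⟨hx, hxj⟩ => ⟨⟨x, hx⟩, hxj, rfl⟩⟩
  rw [← Set.ncard_image_of_injective _ Fin.val_injective, himage, Set.ncard_coe_finset,
    ← Nat.count_eq_card_filter_range, Nat.count_modEq_card _ hk, Nat.mod_eq_of_lt hj]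

theorem exists_fin_map_ncard_fiber_bounds (W : Type*) [Finite W] {a a' k : ℕ}
    (h : a * k ≤ Nat.card W) (h' : Nat.card W ≤ a' * k) :
    ∃ g : W → Fin k, ∀ j, a ≤ (g ⁻¹' {j}).ncard ∧ (g ⁻¹' {j}).ncard ≤ a' := by
  rcases k.eq_zero_or_pos with rfl | hk
  · have : IsEmpty W := Finite.card_eq_zero_iff.1 (by omega)
    exact ⟨isEmptyElim, fun j => j.elim0⟩
  set N := Nat.card W
  let e := Finite.equivFin W
  refine ⟨fun w => ⟨(e w).val % k, Nat.mod_lt _ hk⟩, fun j => ?_⟩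
  have hfiber : (fun w => (⟨(e w).val % k, Nat.mod_lt _ hk⟩ : Fin k)) ⁻¹' {j} =
      e ⁻¹' {x : Fin N | x.val % k = j} := by
    ext w
    simp only [Set.mem_preimage, Set.mem_singleton_iff, Fin.ext_iff]
    rfl
  rw [hfiber, Set.ncard_preimage_of_injective_subset_range e.injective (by simp),
    Fin.ncard_setOf_val_mod_eq N hk j.isLt]
  have hdiv : k * (N / k) + N % k = N := Nat.div_add_mod N k
  have hlo : a ≤ N / k := (Nat.le_div_iff_mul_le hk).2 h
  have hhi : N / k ≤ a' := Nat.div_le_of_le_mul (by linarith)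
  split_ifs with hj
  · have : N / k < a' := by
      by_contra hcon
      nlinarith
    omega
  · omega

theorem SimpleGraph.IsAcyclic.eq_of_adj_of_adj {V : Type*} {G : SimpleGraph V}
    (hG : G.IsAcyclic) {a b c d : V} (hac : a ≠ c) (hab : G.Adj a b) (hbc : G.Adj b c)
    (had : G.Adj a d) (hdc : G.Adj d c) : b = d := by
  have hpath : ∀ {x} (h₁ : G.Adj a x) (h₂ : G.Adj x c),
      (Walk.cons h₁ (Walk.cons h₂ Walk.nil)).IsPath := by
    intro x h₁ h₂
    simp [Walk.cons_isPath_iff, hac, h₁.ne, h₂.ne]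
  have := (hG.subsingleton_path a c).elim ⟨_, hpath hab hbc⟩ ⟨_, hpath had hdc⟩
  simpa using congrArg (fun p : G.Path a c => p.1.getVert 1) this

section

variable {V ι : Type*} {q : ℕ}

theorem IsTreeColoring2.ncard_le_two [Finite V] {G : SimpleGraph V} {f : V → Fin q}
    (hf : IsTreeColoring2 G q f) (v : V) {s : Set V} (hs : ∀ u ∈ s, G.Adj v u ∧ f u = f v) :
    s.ncard ≤ 2 :=
  (Set.ncard_le_ncard hs).trans (hf.2 v)

theorem isTreeColoring2_of_forall_adj_ne {G : SimpleGraph V} {f : V → Fin q}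
    (hf : ∀ v w, G.Adj v w → f v ≠ f w) : IsTreeColoring2 G q f := by
  refine ⟨fun c => isAcyclic_bot.anti fun x y h => hf _ _ h (x.2.trans y.2.symm), fun v => ?_⟩
  have : {w | G.Adj v w ∧ f w = f v} = ∅ :=
    Set.eq_empty_of_forall_notMem fun w hw => hf v w hw.1 hw.2.symm
  simp [this]

theorem IsTreeColoring2.part_eq_of_color_eq [Finite V] {p : V → ι} {f : V → Fin q}
    (hf : IsTreeColoring2 ((⊤ : SimpleGraph ι).comap p) q f) {v w : V} (hvw : f v = f w)
    (hcard : 4 ≤ (f ⁻¹' {f v}).ncard) : p v = p w := by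
  by_contra hne
  set S := f ⁻¹' {f v}
  set A := S ∩ {u | p u = p v}
  set B := S \ {u | p u = p v}
  have hA : A.ncard ≤ 2 := hf.ncard_le_two w fun u hu =>
    ⟨fun h => hne (hu.2.symm.trans h.symm), hu.1.trans hvw⟩
  have hB : B.ncard ≤ 2 := hf.ncard_le_two v fun u hu => ⟨fun h => hu.2 h.symm, hu.1⟩
  have hAB : A.ncard + B.ncard = S.ncard := Set.ncard_inter_add_ncard_sdiff_eq_ncard S _
  obtain ⟨v', hv'A, hv'v⟩ := Set.exists_ne_of_one_lt_ncard (by omega : 1 < A.ncard) v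
  obtain ⟨w', hw'B, hw'w⟩ := Set.exists_ne_of_one_lt_ncard (by omega : 1 < B.ncard) w
  have hv' : p v' = p v := hv'A.2
  have hw'v : p w' ≠ p v := hw'B.2
  by_cases hw' : p w' = p w
  · -- `v, w, v', w'` would form a 4-cycle inside the class of `v`
    refine hw'w ((congrArg Subtype.val <| (hf.1 (f v)).eq_of_adj_of_adj
      (a := ⟨v, rfl⟩) (b := ⟨w, hvw.symm⟩) (c := ⟨v', hv'A.1⟩) (d := ⟨w', hw'B.1⟩)
      ?_ hne (by simpa [hv'] using Ne.symm hne) hw'v.symm (by simpa [hv'] using hw'v)).symm)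
    simpa [Subtype.ext_iff] using hv'v.symm
  · have h3 : ({v, v', w'} : Set V).ncard = 3 := by
      refine Set.ncard_eq_three.2 ⟨v, v', w', hv'v.symm, ?_, ?_, rfl⟩
      · rintro rfl; exact hw'v rfl
      · rintro rfl; exact hw'v hv'
    have := hf.ncard_le_two w (s := {v, v', w'}) (by
      rintro u (rfl | rfl | rfl)
      · exact ⟨Ne.symm hne, hvw⟩
      · exact ⟨by simpa [hv'] using Ne.symm hne, hv'A.1.trans hvw⟩
      · exact ⟨Ne.symm hw', hw'B.1.trans hvw⟩)
    omega

theorem sum_ncard_preimage_singleton {β : Type*} [Finite V] (f : V → β)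
    (t : Finset β) : ∑ b ∈ t, (f ⁻¹' {b}).ncard = (f ⁻¹' ↑t).ncard := by
  classical
  have := Fintype.ofFinite V
  have hcard : ∀ s : Set V, s.ncard = (Finset.univ.filter (· ∈ s)).card := fun s => by
    rw [← Set.ncard_coe_finset]; congr; ext; simp
  simp only [hcard, Set.mem_preimage, Set.mem_singleton_iff, Finset.mem_coe]
  exact Finset.sum_card_fiberwise_eq_card_filter _ _ _

theorem IsEquitableColoring.ncard_bounds [Finite V] {f : V → Fin q} (hf : IsEquitableColoring q f)
    (c : Fin q) :
    q * (f ⁻¹' {c}).ncard + 1 ≤ Nat.card V + q ∧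
      Nat.card V + 1 ≤ q * ((f ⁻¹' {c}).ncard + 1) := by
  set s : Fin q → ℕ := fun c => (f ⁻¹' {c}).ncard
  have htot : s c + ∑ c' ∈ Finset.univ.erase c, s c' = Nat.card V := by
    rw [Finset.add_sum_erase _ _ (Finset.mem_univ c), sum_ncard_preimage_singleton]
    simp
  have hr : (Finset.univ.erase c).card + 1 = q := by
    rw [Finset.card_erase_of_mem (Finset.mem_univ c), Finset.card_univ, Fintype.card_fin]
    have := c.pos
    omega
  set r := (Finset.univ.erase c).card
  have hup : ∑ c' ∈ Finset.univ.erase c, s c' ≤ r * (s c + 1) := by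
    simpa only [smul_eq_mul] using Finset.sum_le_card_nsmul _ _ _ fun c' _ => hf c' c
  have hlow : r * s c ≤ ∑ c' ∈ Finset.univ.erase c, s c' + r := by
    have := Finset.card_nsmul_le_sum (Finset.univ.erase c) (fun c' => s c' + 1) (s c)
      fun c' _ => hf c c'
    simpa only [smul_eq_mul, Finset.sum_add_distrib, Finset.sum_const, mul_one] using this
  have hq : q * s c = r * s c + s c := by rw [← hr]; ring
  constructor <;> nlinarith

theorem exists_classes_per_part [Finite V] [Fintype ι] {p : V → ι} {f : V → Fin q}
    (hfp : ∀ v w, f v = f w → p v = p w) {a a' : ℕ} (ha : 0 < a)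
    (hf : ∀ c, a ≤ (f ⁻¹' {c}).ncard ∧ (f ⁻¹' {c}).ncard ≤ a') :
    ∃ k : ι → ℕ, ∑ i, k i = q ∧
      ∀ i, a * k i ≤ (p ⁻¹' {i}).ncard ∧ (p ⁻¹' {i}).ncard ≤ a' * k i := by
  classical
  have hne : ∀ c, (f ⁻¹' {c}).Nonempty := fun c =>
    Set.nonempty_of_ncard_ne_zero (by have := (hf c).1; omega)
  choose rep hrep using hne
  set T : Fin q → ι := fun c => p (rep c)
  have hT : ∀ v, T (f v) = p v := fun v => hfp _ _ (hrep (f v))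
  have hpart : ∀ i, (p ⁻¹' {i}).ncard = ∑ c ∈ Finset.univ.filter (T · = i), (f ⁻¹' {c}).ncard := by
    intro i
    rw [sum_ncard_preimage_singleton]
    congr 1
    ext v
    simp [hT]
  refine ⟨fun i => (Finset.univ.filter (T · = i)).card, ?_, fun i => ?_⟩
  · rw [← Finset.card_eq_sum_card_fiberwise (fun c _ => Finset.mem_univ (T c))]
    simp
  · rw [hpart, mul_comm, mul_comm a']
    exact ⟨by simpa using Finset.card_nsmul_le_sum _ _ _ fun c _ => (hf c).1,
      by simpa using Finset.sum_le_card_nsmul _ _ _ fun c _ => (hf c).2⟩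

theorem exists_coloring_of_classes_per_part [Finite V] [Fintype ι] (p : V → ι) {a a' : ℕ}
    (k : ι → ℕ) (hk : ∀ i, a * k i ≤ (p ⁻¹' {i}).ncard ∧ (p ⁻¹' {i}).ncard ≤ a' * k i) :
    ∃ f : V → Fin (∑ i, k i), (∀ v w, f v = f w → p v = p w) ∧
      ∀ c, a ≤ (f ⁻¹' {c}).ncard ∧ (f ⁻¹' {c}).ncard ≤ a' := by
  choose g hg using fun i => exists_fin_map_ncard_fiber_bounds (p ⁻¹' {i})
    (by rw [Nat.card_coe_set_eq]; exact (hk i).1) (by rw [Nat.card_coe_set_eq]; exact (hk i).2)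
  let F : V → Σ i, Fin (k i) := fun v => ⟨p v, g (p v) ⟨v, rfl⟩⟩
  let e : (Σ i, Fin (k i)) ≃ Fin (∑ i, k i) := Fintype.equivFinOfCardEq (by simp)
  refine ⟨e ∘ F, fun v w h => congrArg Sigma.fst (e.injective h), fun c => ?_⟩
  obtain ⟨⟨i, j⟩, rfl⟩ := e.surjective c
  have hfiber : (e ∘ F) ⁻¹' {e ⟨i, j⟩} = Subtype.val '' (g i ⁻¹' {j}) := by
    ext v
    simp only [Set.mem_preimage, Function.comp_apply, Set.mem_singleton_iff, e.apply_eq_iff_eq,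
      Set.mem_image, F]
    constructor
    · rintro h
      obtain ⟨rfl, hj⟩ := Sigma.mk.inj_iff.1 h
      exact ⟨⟨v, rfl⟩, eq_of_heq hj, rfl⟩
    · rintro ⟨⟨v, rfl⟩, hj, rfl⟩
      rw [hj]
  rw [hfiber, Set.ncard_image_of_injective _ Subtype.val_injective]
  exact hg i j

theorem hasEquitableTreeColoring2_comap_top [Finite V] [Fintype ι] (p : V → ι) (k : ι → ℕ)
    (hk : ∀ i, 4 * k i ≤ (p ⁻¹' {i}).ncard ∧ (p ⁻¹' {i}).ncard ≤ 5 * k i) :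
    HasEquitableTreeColoring2 ((⊤ : SimpleGraph ι).comap p) (∑ i, k i) := by
  obtain ⟨f, hfp, hf⟩ := exists_coloring_of_classes_per_part p k hk
  refine ⟨f, isTreeColoring2_of_forall_adj_ne fun v w hvw hfvw => hvw (hfp v w hfvw),
    fun c₁ c₂ => ?_⟩
  have := hf c₁
  have := hf c₂
  omega

theorem HasEquitableTreeColoring2.exists_classes_per_part [Finite V] [Fintype ι] {p : V → ι}
    (hp : Function.Surjective p) (hι : 3 ≤ Fintype.card ι) (hV : Nat.card V = 4 * q + 3)
    (h : HasEquitableTreeColoring2 ((⊤ : SimpleGraph ι).comap p) q) :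
    ∃ k : ι → ℕ, ∑ i, k i = q ∧
      ∀ i, 4 * k i ≤ (p ⁻¹' {i}).ncard ∧ (p ⁻¹' {i}).ncard ≤ 5 * k i := by
  obtain ⟨f, hf, hfeq⟩ := h
  have hge : ∀ c, 4 ≤ (f ⁻¹' {c}).ncard := fun c => by
    have := hfeq.ncard_bounds c
    nlinarith
  have hfp : ∀ v w, f v = f w → p v = p w := fun v w hvw => hf.part_eq_of_color_eq hvw (hge _)
  -- distinct parts receive distinct colors
  have hq : 3 ≤ q := by
    refine hι.trans ?_
    simpa using Fintype.card_le_of_injective (f ∘ Function.surjInv hp) fun i j hij => by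
      simpa [Function.surjInv_eq hp] using hfp _ _ hij
  have hle : ∀ c, (f ⁻¹' {c}).ncard ≤ 5 := fun c => by
    have := hfeq.ncard_bounds c
    nlinarith
  exact _root_.exists_classes_per_part hfp (by norm_num) fun c => ⟨hge c, hle c⟩

end

theorem completeTripartiteGraph_eq_comap (l m n : ℕ) :
    completeTripartiteGraph l m n = (⊤ : SimpleGraph (Fin 3)).comap triPart :=
  rfl

theorem triPart_surjective {l m n : ℕ} (hl : 0 < l) (hm : 0 < m) (hn : 0 < n) :
    Function.Surjective (triPart (l := l) (m := m) (n := n)) := by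
  intro i
  fin_cases i
  exacts [⟨.inl ⟨0, hl⟩, rfl⟩, ⟨.inr (.inl ⟨0, hm⟩), rfl⟩, ⟨.inr (.inr ⟨0, hn⟩), rfl⟩]

theorem ncard_triPart_preimage (l m n : ℕ) (i : Fin 3) :
    (triPart (l := l) (m := m) (n := n) ⁻¹' {i}).ncard = ![l, m, n] i := by
  classical
  rw [Set.ncard_eq_toFinset_card', Set.toFinset_card, Fintype.card_subtype, Finset.card_filter,
    Fintype.sum_sum_type, Fintype.sum_sum_type]
  fin_cases i <;> simp [triPart]

theorem conditionB_iff_exists_classes_per_part {l m n b : ℕ} (hl : 0 < l) (hm : 0 < m)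
    (hn : 0 < n) (hsum : l + m + n = 4 * b + 3) :
    ConditionB l m n ↔ ∃ k : Fin 3 → ℕ, ∑ i, k i = b ∧
      ∀ i, 4 * k i ≤ ![l, m, n] i ∧ ![l, m, n] i ≤ 5 * k i := by
  simp only [Fin.sum_univ_three, Fin.forall_fin_succ]
  constructor
  · rintro ⟨j, h, k, hj, hh, hk, hc⟩
    simp only [Prod.mk.injEq] at hc
    exact ⟨![l / 4, m / 4, n / 4], by
      simp only [Matrix.cons_val_zero, Matrix.cons_val_one, Matrix.cons_val_succ,
        Fin.succ_zero_eq_one, Fin.succ_one_eq_two, Matrix.cons_val, IsEmpty.forall_iff, and_true]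
      omega⟩
  · rintro ⟨k, rfl, h₀, h₁, h₂, -⟩
    simp only [Fin.succ_zero_eq_one, Fin.succ_one_eq_two, Matrix.cons_val] at h₀ h₁ h₂
    obtain ⟨e₀, rfl⟩ : ∃ e, l = 4 * k 0 + e := ⟨l - 4 * k 0, by omega⟩
    obtain ⟨e₁, rfl⟩ : ∃ e, m = 4 * k 1 + e := ⟨m - 4 * k 1, by omega⟩
    obtain rfl : n = 4 * k 2 + (3 - e₀ - e₁) := by omega
    have he₀ : e₀ ≤ 3 := by omega
    have he₁ : e₁ ≤ 3 - e₀ := by omega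
    -- part `i` holds `eᵢ` classes of size five; Condition B's parameter for it is `kᵢ - (eᵢ - 1)`
    refine ⟨k 0 - (e₀ - 1), k 1 - (e₁ - 1), k 2 - (3 - e₀ - e₁ - 1),
      by omega, by omega, by omega, ?_⟩
    simp only [Prod.mk.injEq]
    interval_cases e₀ <;> interval_cases e₁ <;> norm_num <;> omega

theorem statement17_general (l m n b : ℕ) (hl : 0 < l) (hlm : l ≤ m) (hmn : m ≤ n)
    (hsum : l + m + n = 4 * b + 3) :
    HasEquitableTreeColoring2 (completeTripartiteGraph l m n) b ↔
      ConditionB l m n := by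
  have hm : 0 < m := hl.trans_le hlm
  have hn : 0 < n := hm.trans_le hmn
  simp only [conditionB_iff_exists_classes_per_part hl hm hn hsum, completeTripartiteGraph_eq_comap,
    ← ncard_triPart_preimage l m n]
  constructor
  · exact HasEquitableTreeColoring2.exists_classes_per_part (triPart_surjective hl hm hn) (by simp)
      (by simp only [Nat.card_eq_fintype_card, Fintype.card_sum, Fintype.card_fin]; omega)
  · rintro ⟨k, rfl, hk⟩
    exact hasEquitableTreeColoring2_comap_top triPart k hk

theorem statement17 (l m n b : ℕ) (hl : 0 < l) (hlm : l ≤ m) (hmn : m ≤ n)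
    (hb : 0 < b) (hsum : l + m + n = 4 * b + 3) :
    HasEquitableTreeColoring2 (completeTripartiteGraph l m n) b ↔
      ConditionB l m n :=
  statement17_general l m n b hl hlm hmn hsum
end
end
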